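/- Let p ≥ 2 and define V : ℝ^(N×n) → ℝ by V(z) = |z|² + |z|^p. Then for every open set ω ⊆ ℝⁿ of finite positive Lebesgue measure, there exists a constant c = c(p) > 0 such that for every f ∈ L^p(ω, ℝ^(N×n)) and every constant matrix ξ ∈ ℝ^(N×n), the mean value over ω of |V(f − (f)_ω)|² is at most c times the mean value over ω of |V(f − ξ)|², where (f)_ω denotes the average of f over ω. -/

import Mathlib

/-!
`W = V²` is convex (a nondecreasing convex function of the norm, squared while nonnegative), and
`W (2z) ≤ 4^p W z`. Convexity at the midpoint then gives the quasi-triangle inequality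
`W (z + w) ≤ 4^p / 2 (W z + W w)`, and Jensen's inequality gives `W ((f)_ω - ξ) ≤ (W (f - ξ))_ω`.
Splitting `f - (f)_ω = (f - ξ) + (ξ - (f)_ω)` and averaging yields the bound with `c = 4^p`.
-/

open MeasureTheory Set

section NormPow

variable {E : Type*} [NormedAddCommGroup E] [NormedSpace ℝ E]

theorem convexOn_univ_norm_rpow {p : ℝ} (hp : 1 ≤ p) :
    ConvexOn ℝ univ fun z : E => ‖z‖ ^ p := by
  refine ⟨convex_univ, fun x _ y _ a b ha hb hab => ?_⟩
  calc ‖a • x + b • y‖ ^ p ≤ (a • ‖x‖ + b • ‖y‖) ^ p := by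
        gcongr
        exact convexOn_univ_norm.2 trivial trivial ha hb hab
    _ ≤ a • ‖x‖ ^ p + b • ‖y‖ ^ p :=
        (convexOn_rpow hp).2 (norm_nonneg x) (norm_nonneg y) ha hb hab

theorem convexOn_univ_norm_sq_add_norm_rpow {p : ℝ} (hp : 1 ≤ p) :
    ConvexOn ℝ univ fun z : E => ‖z‖ ^ 2 + ‖z‖ ^ p :=
  (convexOn_univ_norm.pow (fun _ _ => norm_nonneg _) 2).add (convexOn_univ_norm_rpow hp)

theorem norm_sq_add_norm_rpow_two_smul_le {p : ℝ} (hp : 2 ≤ p) (z : E) :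
    ‖(2 : ℝ) • z‖ ^ 2 + ‖(2 : ℝ) • z‖ ^ p ≤ 2 ^ p * (‖z‖ ^ 2 + ‖z‖ ^ p) := by
  have h4 : (4 : ℝ) ≤ 2 ^ p := calc
    (4 : ℝ) = 2 ^ (2 : ℝ) := by norm_num [Real.rpow_two]
    _ ≤ 2 ^ p := Real.rpow_le_rpow_of_exponent_le one_le_two hp
  rw [norm_smul, Real.norm_two, Real.mul_rpow zero_le_two (norm_nonneg z)]
  nlinarith [sq_nonneg ‖z‖]

end NormPow

section QuasiMinimality

variable {α E : Type*} [MeasurableSpace α] {μ : Measure α}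
  [NormedAddCommGroup E] [NormedSpace ℝ E] {W : E → ℝ} {C : ℝ}

theorem ConvexOn.le_half_mul_add_of_doubling (hW : ConvexOn ℝ univ W) (hC : 0 ≤ C)
    (hdouble : ∀ z, W ((2 : ℝ) • z) ≤ C * W z) (z w : E) :
    W (z + w) ≤ C / 2 * (W z + W w) := by
  have hmid : W ((1 / 2 : ℝ) • z + (1 / 2 : ℝ) • w) ≤ (1 / 2 : ℝ) • W z + (1 / 2 : ℝ) • W w :=
    hW.2 trivial trivial (by norm_num) (by norm_num) (by norm_num)
  calc W (z + w) = W ((2 : ℝ) • ((1 / 2 : ℝ) • z + (1 / 2 : ℝ) • w)) := by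
        rw [smul_add, smul_smul, smul_smul]; norm_num
    _ ≤ C * W ((1 / 2 : ℝ) • z + (1 / 2 : ℝ) • w) := hdouble _
    _ ≤ C * ((1 / 2 : ℝ) • W z + (1 / 2 : ℝ) • W w) := mul_le_mul_of_nonneg_left hmid hC
    _ = C / 2 * (W z + W w) := by simp only [smul_eq_mul]; ring

theorem ConvexOn.integrable_comp_sub_of_doubling [IsFiniteMeasure μ] (hW : ConvexOn ℝ univ W)
    (hWc : Continuous W) (hW0 : ∀ z, 0 ≤ W z) (hC : 0 ≤ C)
    (hdouble : ∀ z, W ((2 : ℝ) • z) ≤ C * W z) {f : α → E} (hf : AEStronglyMeasurable f μ)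
    (a b : E) (ha : Integrable (fun x => W (f x - a)) μ) :
    Integrable (fun x => W (f x - b)) μ := by
  refine ((ha.add (integrable_const (W (a - b)))).const_mul (C / 2)).mono'
    (hWc.comp_aestronglyMeasurable (hf.sub aestronglyMeasurable_const)) (ae_of_all _ fun x => ?_)
  rw [Real.norm_of_nonneg (hW0 _), ← sub_add_sub_cancel (f x) a b]
  exact hW.le_half_mul_add_of_doubling hC hdouble _ _

variable [CompleteSpace E]

theorem ConvexOn.comp_sub_integral_le [IsProbabilityMeasure μ] (hW : ConvexOn ℝ univ W)
    (hWc : Continuous W) {f : α → E} (hf : Integrable f μ) (ξ : E)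
    (hi : Integrable (fun x => W (f x - ξ)) μ) :
    W ((∫ x, f x ∂μ) - ξ) ≤ ∫ x, W (f x - ξ) ∂μ := by
  have hconv : ConvexOn ℝ univ fun z => W (z - ξ) := by
    simpa [Function.comp_def, neg_add_eq_sub] using hW.translate_right (-ξ)
  exact hconv.map_integral_le (hWc.comp (continuous_sub_right ξ)).continuousOn isClosed_univ
    (ae_of_all _ fun _ => trivial) hf hi

theorem ConvexOn.integral_comp_sub_integral_le [IsProbabilityMeasure μ] (hW : ConvexOn ℝ univ W)
    (hWc : Continuous W) (hW0 : ∀ z, 0 ≤ W z) (hWeven : ∀ z, W (-z) = W z) (hC : 0 ≤ C)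
    (hdouble : ∀ z, W ((2 : ℝ) • z) ≤ C * W z) {f : α → E} (hf : Integrable f μ) (ξ : E) :
    ∫ x, W (f x - ∫ y, f y ∂μ) ∂μ ≤ C * ∫ x, W (f x - ξ) ∂μ := by
  set m := ∫ y, f y ∂μ
  have htransfer := hW.integrable_comp_sub_of_doubling hWc hW0 hC hdouble hf.1
  by_cases hξ : Integrable (fun x => W (f x - ξ)) μ
  swap
  · -- both integrals are junk `0`
    have hm : ¬ Integrable (fun x => W (f x - m)) μ := fun hm => hξ (htransfer m ξ hm)
    simp [integral_undef hm, integral_undef hξ]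
  have hjensen : W (ξ - m) ≤ ∫ x, W (f x - ξ) ∂μ := by
    rw [← neg_sub, hWeven]; exact hW.comp_sub_integral_le hWc hf ξ hξ
  calc ∫ x, W (f x - m) ∂μ ≤ ∫ x, C / 2 * (W (f x - ξ) + W (ξ - m)) ∂μ := by
        refine integral_mono (htransfer ξ m hξ) ((hξ.add (integrable_const _)).const_mul _)
          fun x => ?_
        rw [← sub_add_sub_cancel (f x) ξ m]
        exact hW.le_half_mul_add_of_doubling hC hdouble _ _
    _ = C / 2 * (∫ x, W (f x - ξ) ∂μ + W (ξ - m)) := by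
        rw [integral_const_mul, integral_add hξ (integrable_const _), integral_const,
          probReal_univ, one_smul]
    _ ≤ C * ∫ x, W (f x - ξ) ∂μ := by nlinarith

end QuasiMinimality

theorem average_V_quasi_minimality (N n : ℕ) (p : ℝ) (hp : 2 ≤ p)
    (V : EuclideanSpace ℝ (Fin N × Fin n) → ℝ)
    (hV : ∀ z, V z = ‖z‖ ^ 2 + ‖z‖ ^ p) :
    ∀ ω : Set (EuclideanSpace ℝ (Fin n)), IsOpen ω →
      0 < volume ω → volume ω < ⊤ →
      ∃ c : ℝ, 0 < c ∧
        ∀ f : EuclideanSpace ℝ (Fin n) → EuclideanSpace ℝ (Fin N × Fin n),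
          MemLp f (ENNReal.ofReal p) (volume.restrict ω) →
          ∀ ξ : EuclideanSpace ℝ (Fin N × Fin n),
            ⨍ x in ω, (V (f x - ⨍ y in ω, f y)) ^ 2 ≤
              c * ⨍ x in ω, (V (f x - ξ)) ^ 2 := by
  obtain rfl : V = fun z => ‖z‖ ^ 2 + ‖z‖ ^ p := funext hV
  intro ω _ hpos hfin
  have : IsFiniteMeasure (volume.restrict ω) := isFiniteMeasure_restrict.2 hfin.ne
  have : NeZero (volume.restrict ω) := ⟨by simpa using hpos.ne'⟩
  refine ⟨(2 ^ p) ^ 2, by positivity, fun f hf ξ => ?_⟩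
  have hf1 : Integrable f (volume.restrict ω) :=
    hf.integrable (ENNReal.one_le_ofReal.2 (by linarith))
  have hconv :
      ConvexOn ℝ univ fun z : EuclideanSpace ℝ (Fin N × Fin n) => (‖z‖ ^ 2 + ‖z‖ ^ p) ^ 2 :=
    (convexOn_univ_norm_sq_add_norm_rpow (by linarith)).pow (fun _ _ => by positivity) 2
  have hdouble (z : EuclideanSpace ℝ (Fin N × Fin n)) :
      (‖(2 : ℝ) • z‖ ^ 2 + ‖(2 : ℝ) • z‖ ^ p) ^ 2 ≤ (2 ^ p) ^ 2 * (‖z‖ ^ 2 + ‖z‖ ^ p) ^ 2 := by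
    rw [← mul_pow]
    exact pow_le_pow_left₀ (by positivity) (norm_sq_add_norm_rpow_two_smul_le hp z) 2
  -- `⨍ x in ω, g x` is by definition the integral of `g` against the probability measure
  -- `(volume.restrict ω univ)⁻¹ • volume.restrict ω`.
  exact hconv.integral_comp_sub_integral_le (by fun_prop (disch := linarith))
    (fun _ => by positivity) (fun _ => by rw [norm_neg]) (by positivity) hdouble
    (hf1.smul_measure (by simpa using hpos.ne')) ξ
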